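/- arXiv:2410.09425 — 4 statements merged into one kernel-verified Lean document; each statement's English description precedes it below -/
import Mathlib

section
/- In the digraph G' constructed from G as above, if an s-t path X intersects every vertical path P_1,...,P_n (i.e., X uses at least one vertical arc from each P_i), then X contains exactly n-1 diagonal arcs. -/
abbrev Vtx (n : ℕ) := Sum Unit (Sum (Fin n × Fin (2 * n)) Unit)

def src (n : ℕ) : Vtx n := Sum.inl ()
def snk (n : ℕ) : Vtx n := Sum.inr (Sum.inr ())

/-- Arcs of `G'` built from a digraph `G` on `n` vertices: vertical arcs
`s → v_i^1`, `v_i^j → v_i^{j+1}`, `v_i^{2n} → t` (layers are 0-indexed here),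
and diagonal arcs `v_i^{2j} → v_k^{2j+1}` (0-indexed: from an odd layer index to
its successor) whenever `(v_i, v_k)` is an arc of `G`. -/
def Arc {n : ℕ} (G : Fin n → Fin n → Prop) : Vtx n → Vtx n → Prop
  | Sum.inl _, Sum.inr (Sum.inl (_, j)) => j.val = 0
  | Sum.inr (Sum.inl (i, j)), Sum.inr (Sum.inl (k, j')) =>
      (i = k ∧ j'.val = j.val + 1) ∨ (G i k ∧ j.val % 2 = 1 ∧ j'.val = j.val + 1)
  | Sum.inr (Sum.inl (_, j)), Sum.inr (Sum.inr _) => j.val = 2 * n - 1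
  | _, _ => False

def IsPath {α : Type*} (A : α → α → Prop) (s t : α) (p : List α) : Prop :=
  p.Chain' A ∧ p.head? = some s ∧ p.getLast? = some t

/-- A pair of endpoints forms a diagonal arc iff both are middle vertices lying in
different columns. -/
def isDiag {n : ℕ} : Vtx n × Vtx n → Bool
  | (Sum.inr (Sum.inl (i, _)), Sum.inr (Sum.inl (k, _))) => decide (i ≠ k)
  | _ => false

/-- A pair of endpoints forms a vertical arc of the vertical path `P_i`
(including the arcs leaving `s` and entering `t`). -/
def isVert {n : ℕ} (i : Fin n) : Vtx n × Vtx n → Bool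
  | (Sum.inl _, Sum.inr (Sum.inl (k, _))) => decide (k = i)
  | (Sum.inr (Sum.inl (k, _)), Sum.inr (Sum.inl (k', _))) => decide (k = i ∧ k' = i)
  | (Sum.inr (Sum.inl (k, _)), Sum.inr (Sum.inr _)) => decide (k = i)
  | _ => false

def col {n : ℕ} : Vtx n → Option (Fin n)
  | Sum.inr (Sum.inl (i, _)) => some i
  | _ => none

lemma diag_le {n : ℕ} (G : Fin n → Fin n → Prop) :
    ∀ (q : List (Vtx n)) (i : Fin n) (j : Fin (2*n)),
    q.Chain' (Arc G) → q.head? = some (Sum.inr (Sum.inl (i,j))) →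
    (q.zip q.tail).countP isDiag ≤ (2*n - 1 - j.val) / 2 := by
  intro q
  induction q with
  | nil => intro i j _ h; simp at h
  | cons x q ih =>
    intro i j hch hh
    simp only [List.head?_cons, Option.some.injEq] at hh
    subst hh
    match q, hch with
    | [], _ => simp
    | y :: rest, hch =>
      have harc : Arc G (Sum.inr (Sum.inl (i,j))) y := (List.isChain_cons_cons.mp hch).1
      have hch' : (y :: rest).Chain' (Arc G) := (List.isChain_cons_cons.mp hch).2
      match y with
      | Sum.inl _ => exact harc.elim
      | Sum.inr (Sum.inr _) =>
        match rest, hch' with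
        | [], _ => simp [isDiag]
        | r :: rest', hch' =>
          exact ((List.isChain_cons_cons.mp hch').1).elim
      | Sum.inr (Sum.inl (k, j')) =>
        have hj' : j'.val = j.val + 1 := by
          rcases harc with ⟨_, h⟩ | ⟨_, _, h⟩ <;> exact h
        have hlt : j'.val < 2*n := j'.isLt
        have ihh := ih k j' hch' (by simp)
        simp only [List.tail_cons] at ihh
        simp only [List.zip_cons_cons, List.tail_cons, List.countP_cons]
        by_cases hik : i = k
        · have : isDiag ((Sum.inr (Sum.inl (i,j)) : Vtx n), Sum.inr (Sum.inl (k,j'))) = false := by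
            simp [isDiag, hik]
          rw [this]
          simp only [Bool.false_eq_true, if_false]
          omega
        · have hodd : j.val % 2 = 1 := by
            rcases harc with ⟨h, _⟩ | ⟨_, h, _⟩
            · exact absurd h hik
            · exact h
          have : isDiag ((Sum.inr (Sum.inl (i,j)) : Vtx n), Sum.inr (Sum.inl (k,j'))) = true := by
            simp [isDiag, hik]
          rw [this]
          simp only [if_pos rfl]
          simp only [if_true]
          omega

lemma fm_mid {n : ℕ} (k : Fin n) (j : Fin (2*n)) (rest : List (Vtx n)) :
    ((Sum.inr (Sum.inl (k,j)) :: rest : List (Vtx n)).filterMap col) = k :: rest.filterMap col := rfl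

lemma fm_src {n : ℕ} (u : Unit) (rest : List (Vtx n)) :
    ((Sum.inl u :: rest : List (Vtx n)).filterMap col) = rest.filterMap col := rfl

lemma fm_snk {n : ℕ} (u : Unit) (rest : List (Vtx n)) :
    ((Sum.inr (Sum.inr u) :: rest : List (Vtx n)).filterMap col) = rest.filterMap col := rfl

lemma cols_card_le {n : ℕ} (G : Fin n → Fin n → Prop) :
    ∀ (q : List (Vtx n)), q.Chain' (Arc G) →
    (q.filterMap col).toFinset.card ≤ (q.zip q.tail).countP isDiag + 1 := by
  intro q
  induction q with
  | nil => simp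
  | cons x q ih =>
    intro hch
    match q, hch with
    | [], _ =>
      match x with
      | Sum.inl _ => simp [fm_src]
      | Sum.inr (Sum.inl (i,j)) => simp [fm_mid]
      | Sum.inr (Sum.inr _) => simp [fm_snk]
    | y :: rest, hch =>
      have harc : Arc G x y := (List.isChain_cons_cons.mp hch).1
      have hch' : (y :: rest).Chain' (Arc G) := (List.isChain_cons_cons.mp hch).2
      have IH := ih hch'
      simp only [List.zip_cons_cons, List.tail_cons, List.countP_cons] at *
      match x, y with
      | Sum.inl _, Sum.inl _ => exact harc.elim
      | Sum.inl _, Sum.inr (Sum.inr _) => exact harc.elim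
      | Sum.inr (Sum.inr _), _ => exact harc.elim
      | Sum.inl _, Sum.inr (Sum.inl (k, j')) =>
        have hd : isDiag ((Sum.inl () : Vtx n), Sum.inr (Sum.inl (k,j'))) = false := rfl
        rw [fm_src, hd]
        simp only [Bool.false_eq_true, if_false]
        omega
      | Sum.inr (Sum.inl (a, j)), Sum.inr (Sum.inr _) =>
        match rest, hch' with
        | [], _ =>
          simp [fm_mid, fm_snk, isDiag]
        | r :: rest', hch' =>
          exact ((List.isChain_cons_cons.mp hch').1).elim
      | Sum.inr (Sum.inl (a, j)), Sum.inr (Sum.inl (k, j')) =>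
        rw [fm_mid] at IH
        rw [fm_mid, fm_mid]
        simp only [List.toFinset_cons] at IH ⊢
        by_cases hak : a = k
        · subst hak
          have hd : isDiag ((Sum.inr (Sum.inl (a,j)) : Vtx n), Sum.inr (Sum.inl (a,j'))) = false := by
            simp [isDiag]
          rw [hd, Finset.insert_idem]
          simp only [Bool.false_eq_true, if_false]
          omega
        · have hd : isDiag ((Sum.inr (Sum.inl (a,j)) : Vtx n), Sum.inr (Sum.inl (k,j'))) = true := by
            simp [isDiag, hak]
          rw [hd]
          simp only [if_pos rfl, if_true]
          have := Finset.card_insert_le a (insert k (rest.filterMap col).toFinset)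
          omega

/-- If an `s`-`t` path `X` in `G'` uses at least one vertical arc from each of the
vertical paths `P_1, …, P_n`, then `X` contains exactly `n - 1` diagonal arcs. -/
theorem path_meeting_all_verticals_has_n_sub_one_diagonals (n : ℕ) (hn : 0 < n)
    (G : Fin n → Fin n → Prop) (p : List (Vtx n))
    (hp : IsPath (Arc G) (src n) (snk n) p)
    (hint : ∀ i : Fin n, ∃ e ∈ p.zip p.tail, isVert i e = true) :
    (p.zip p.tail).countP isDiag = n - 1 := by
  obtain ⟨hch, hh, hl⟩ := hp
  -- upper bound
  have hupper : (p.zip p.tail).countP isDiag ≤ n - 1 := by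
    match p, hh with
    | x :: q, hh =>
      simp only [List.head?_cons, Option.some.injEq] at hh
      subst hh
      match q, hl with
      | [], hl => simp [src, snk] at hl
      | y :: rest, _ =>
        have harc : Arc G (src n) y := (List.isChain_cons_cons.mp hch).1
        have hch' : (y :: rest).Chain' (Arc G) := (List.isChain_cons_cons.mp hch).2
        match y with
        | Sum.inl _ => exact harc.elim
        | Sum.inr (Sum.inr _) => exact harc.elim
        | Sum.inr (Sum.inl (k, j')) =>
          have hj0 : j'.val = 0 := harc
          have := diag_le G (Sum.inr (Sum.inl (k,j')) :: rest) k j' hch' (by simp)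
          simp only [List.tail_cons] at this
          simp only [List.zip_cons_cons, List.tail_cons, List.countP_cons]
          have hd : isDiag ((src n : Vtx n), Sum.inr (Sum.inl (k,j'))) = false := rfl
          rw [hd]
          simp only [Bool.false_eq_true, if_false]
          omega
  -- lower bound
  have hmemcol : ∀ i : Fin n, i ∈ (p.filterMap col).toFinset := by
    intro i
    obtain ⟨e, he, hv⟩ := hint i
    have hx : e.1 ∈ p := (List.of_mem_zip (by simpa using he)).1
    have hy : e.2 ∈ p.tail := (List.of_mem_zip (by simpa using he)).2
    have hy' : e.2 ∈ p := List.mem_of_mem_tail hy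
    obtain ⟨v, hvp, hcv⟩ : ∃ v ∈ p, col v = some i := by
      obtain ⟨a, b⟩ := e
      match a, b with
      | Sum.inl _, Sum.inr (Sum.inl (k, j)) =>
        simp only [isVert, decide_eq_true_eq] at hv
        exact ⟨_, hy', by simp [col, hv]⟩
      | Sum.inr (Sum.inl (k, j)), Sum.inr (Sum.inl (k', j')) =>
        simp only [isVert, decide_eq_true_eq] at hv
        exact ⟨_, hx, by simp [col, hv.1]⟩
      | Sum.inr (Sum.inl (k, j)), Sum.inr (Sum.inr _) =>
        simp only [isVert, decide_eq_true_eq] at hv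
        exact ⟨_, hx, by simp [col, hv]⟩
      | Sum.inl _, Sum.inl _ => simp [isVert] at hv
      | Sum.inl _, Sum.inr (Sum.inr _) => simp [isVert] at hv
      | Sum.inr (Sum.inr _), _ => simp [isVert] at hv
    simp only [List.mem_toFinset, List.mem_filterMap]
    exact ⟨v, hvp, hcv⟩
  have hcard : n ≤ (p.filterMap col).toFinset.card := by
    have : (Finset.univ : Finset (Fin n)) ⊆ (p.filterMap col).toFinset := fun i _ => hmemcol i
    calc n = (Finset.univ : Finset (Fin n)).card := by simp
      _ ≤ _ := Finset.card_le_card this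
  have hlower := cols_card_le G p hch
  omega
end

section
/- The digraph G has a Hamiltonian path if and only if the constructed layered digraph G' contains an s-t path X that uses at least one arc from each of the n disjoint vertical paths P_1,...,P_n. -/
/-- `G` has a Hamiltonian (directed, simple) path visiting all `n` vertices. -/
def HasHamPath {n : ℕ} (G : Fin n → Fin n → Prop) : Prop :=
  ∃ l : List (Fin n), l.Nodup ∧ l.length = n ∧ l.Chain' G

/-!
Every arc of `G'` goes from one layer to the next, and the arcs leaving an even (0-indexed)
layer are vertical. Hence an `s`-`t` path runs down a single column `c_m` through each pair of
layers `2m, 2m + 1`: it is determined by its list of columns `[c_0, …, c_{n-1}]`, in which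
consecutive columns are equal or joined by an arc of `G`. The path uses an arc of `P_i` exactly
when `i` occurs in this list, so it meets every vertical path iff the list of `n` columns has no
repetitions, and then it is a Hamiltonian path of `G`.
-/

open Relation

theorem List.IsChain.of_reflGen_of_nodup {α : Type*} {R : α → α → Prop} {l : List α}
    (hl : l.Nodup) (h : l.IsChain (ReflGen R)) : l.IsChain R := by
  induction h with
  | nil => exact .nil
  | singleton a => exact .singleton a
  | @cons_cons a b l hab _ ih =>
    refine .cons_cons ?_ (ih hl.of_cons)
    rcases hab with _ | hab
    · simp at hl
    · exact hab

theorem List.nodup_iff_forall_mem_of_length_eq_card {α : Type*} [Fintype α] [DecidableEq α]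
    {l : List α} (h : l.length = Fintype.card α) : l.Nodup ↔ ∀ a, a ∈ l := by
  rw [← Multiset.coe_nodup, ← Multiset.toFinset_card_eq_card_iff_nodup, Multiset.coe_card, h,
    Finset.card_eq_iff_eq_univ, Finset.eq_univ_iff_forall]
  simp

theorem List.mem_zip_cons_of_mem_zip_tail {α : Type*} {e : α × α} {l : List α} (a : α)
    (h : e ∈ l.zip l.tail) : e ∈ (a :: l).zip l := by
  cases l <;> simp_all

section

variable {n : ℕ} {G : Fin n → Fin n → Prop}

/-- The vertex `v_i^{j+1}` of `G'`; the layer is reduced mod `2 * n` only to make it a `Fin`,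
and is always in range where it is used. -/
def midAt (i : Fin n) (j : ℕ) : Vtx n :=
  Sum.inr (Sum.inl (i, ⟨j % (2 * n), Nat.mod_lt _ (by have := i.pos; omega)⟩))

def columnPath : List (Fin n) → ℕ → List (Vtx n)
  | [], _ => [snk n]
  | i :: l, m => midAt i (2 * m) :: midAt i (2 * m + 1) :: columnPath l (m + 1)

theorem midAt_eq_mid {i : Fin n} {j : ℕ} (h : j < 2 * n) :
    midAt i j = Sum.inr (Sum.inl (i, ⟨j, h⟩)) := by
  simp [midAt, Nat.mod_eq_of_lt h]

theorem mid_eq_midAt {i : Fin n} {j : Fin (2 * n)} {j' : ℕ} (h : (j : ℕ) = j') :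
    Sum.inr (Sum.inl (i, j)) = midAt i j' := by
  subst h
  simp [midAt, Nat.mod_eq_of_lt j.isLt]

theorem arc_src_midAt (i : Fin n) : Arc G (src n) (midAt i 0) := by
  simp [Arc, src, midAt]

theorem arc_midAt_succ {i : Fin n} {j : ℕ} (h : j + 1 < 2 * n) :
    Arc G (midAt i j) (midAt i (j + 1)) := by
  rw [midAt_eq_mid (by omega), midAt_eq_mid h]
  exact Or.inl ⟨rfl, rfl⟩

theorem arc_midAt_of_reflGen {i k : Fin n} {m : ℕ} (hm : m + 1 < n) (h : ReflGen G i k) :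
    Arc G (midAt i (2 * m + 1)) (midAt k (2 * (m + 1))) := by
  rw [midAt_eq_mid (by omega), midAt_eq_mid (by omega)]
  rcases h with _ | h
  · exact Or.inl ⟨rfl, by simp; omega⟩
  · exact Or.inr ⟨h, by simp, by simp; omega⟩

theorem arc_midAt_snk {i : Fin n} {m : ℕ} (hm : m + 1 = n) :
    Arc G (midAt i (2 * m + 1)) (snk n) := by
  rw [midAt_eq_mid (by omega)]
  show 2 * m + 1 = 2 * n - 1
  omega

theorem not_arc_snk (y : Vtx n) : ¬ Arc G (snk n) y := by
  simp [Arc, snk]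

theorem exists_eq_midAt_of_arc_src {y : Vtx n} (h : Arc G (src n) y) : ∃ i, y = midAt i 0 := by
  rcases y with _ | ⟨i, j⟩ | _
  all_goals simp only [Arc, src] at h
  exact ⟨i, mid_eq_midAt h⟩

theorem eq_midAt_of_arc_midAt_even {i : Fin n} {m : ℕ} {y : Vtx n} (hm : m < n)
    (h : Arc G (midAt i (2 * m)) y) : y = midAt i (2 * m + 1) := by
  rw [midAt_eq_mid (by omega)] at h
  rcases y with _ | ⟨k, j⟩ | _
  all_goals simp only [Arc, Nat.mul_mod_right, zero_ne_one, false_and, and_false, or_false] at h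
  · obtain ⟨rfl, hj⟩ := h
    exact mid_eq_midAt hj
  · omega

theorem arc_midAt_odd_cases {i : Fin n} {m : ℕ} {y : Vtx n} (hm : m < n)
    (h : Arc G (midAt i (2 * m + 1)) y) :
    (m + 1 = n ∧ y = snk n) ∨ ∃ k, ReflGen G i k ∧ m + 1 < n ∧ y = midAt k (2 * (m + 1)) := by
  rw [midAt_eq_mid (by omega)] at h
  rcases y with _ | ⟨k, j⟩ | _
  all_goals simp only [Arc, Nat.mul_add_mod_self_left, Nat.mod_succ, true_and] at h
  · obtain ⟨hk, hj⟩ : ReflGen G i k ∧ (j : ℕ) = 2 * (m + 1) := by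
      rcases h with ⟨rfl, h⟩ | ⟨h, h'⟩
      · exact ⟨.refl, by omega⟩
      · exact ⟨.single h, by omega⟩
    exact Or.inr ⟨k, hk, by have := j.isLt; omega, mid_eq_midAt hj⟩
  · exact Or.inl ⟨by omega, rfl⟩

theorem getLast?_columnPath (l : List (Fin n)) (m : ℕ) :
    (columnPath l m).getLast? = some (snk n) := by
  induction l generalizing m with
  | nil => rfl
  | cons i l ih => simp [columnPath, List.getLast?_cons, ih]

theorem isChain_columnPath {l : List (Fin n)} {m : ℕ} (hl : m + l.length = n)
    (h : l.IsChain (ReflGen G)) : (columnPath l m).IsChain (Arc G) := by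
  induction l generalizing m with
  | nil => exact .singleton _
  | cons i l ih =>
    simp only [List.length_cons] at hl
    refine .cons_cons (arc_midAt_succ (by omega)) ?_
    rw [List.isChain_cons] at h ⊢
    refine ⟨?_, ih (by omega) h.2⟩
    cases l with
    | nil => simpa [columnPath] using arc_midAt_snk (by simpa using hl)
    | cons k l =>
      simpa [columnPath] using arc_midAt_of_reflGen (by simp at hl; omega) (h.1 k rfl)

theorem exists_eq_columnPath {i : Fin n} {m : ℕ} (hm : m < n) :
    ∀ {q : List (Vtx n)}, (midAt i (2 * m) :: q).IsChain (Arc G) →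
      (midAt i (2 * m) :: q).getLast? = some (snk n) →
      ∃ l, m + l.length + 1 = n ∧ (i :: l).IsChain (ReflGen G) ∧
        midAt i (2 * m) :: q = columnPath (i :: l) m
  | [], _, hlast => by simp [midAt, snk] at hlast
  | y :: q, hq, hlast => by
    obtain ⟨hy, hq⟩ := List.isChain_cons_cons.1 hq
    obtain rfl := eq_midAt_of_arc_midAt_even hm hy
    match q, hq, hlast with
    | [], _, hlast => simp [midAt, snk] at hlast
    | z :: q, hq, hlast =>
      obtain ⟨hz, hq⟩ := List.isChain_cons_cons.1 hq
      rcases arc_midAt_odd_cases hm hz with ⟨hmn, rfl⟩ | ⟨k, hik, hmk, rfl⟩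
      · cases q with
        | nil => exact ⟨[], by simpa using hmn, .singleton i, rfl⟩
        | cons w q => exact absurd (List.isChain_cons_cons.1 hq).1 (not_arc_snk w)
      · obtain ⟨l, hl, hch, heq⟩ := exists_eq_columnPath hmk hq (by simpa using hlast)
        exact ⟨k :: l, by simp; omega, .cons_cons hik hch, by rw [heq]; rfl⟩

theorem mem_of_mid_mem_columnPath {l : List (Fin n)} {m : ℕ} {c : Fin n} {j : Fin (2 * n)}
    (h : Sum.inr (Sum.inl (c, j)) ∈ columnPath l m) : c ∈ l := by
  induction l generalizing m with
  | nil => simp [columnPath, snk] at h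
  | cons i l ih =>
    simp only [columnPath, List.mem_cons, midAt, Sum.inr.injEq, Sum.inl.injEq, Prod.mk.injEq] at h
    rcases h with ⟨rfl, _⟩ | ⟨rfl, _⟩ | h
    · exact List.mem_cons_self
    · exact List.mem_cons_self
    · exact List.mem_cons_of_mem i (ih h)

theorem exists_mid_mem_of_isVert {p : List (Vtx n)} {c : Fin n} {e : Vtx n × Vtx n}
    (he : e ∈ p.zip p.tail) (hv : isVert c e = true) : ∃ j, Sum.inr (Sum.inl (c, j)) ∈ p := by
  obtain ⟨x, y⟩ := e
  obtain ⟨hx, hy⟩ := List.of_mem_zip he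
  replace hy := List.mem_of_mem_tail hy
  rcases x with _ | ⟨k, j⟩ | _ <;> rcases y with _ | ⟨k', j'⟩ | _ <;>
    simp only [isVert, Bool.false_eq_true, decide_eq_true_eq, Bool.decide_and,
      Bool.and_eq_true] at hv
  · exact ⟨j', hv ▸ hy⟩
  · exact ⟨j, hv.1 ▸ hx⟩
  · exact ⟨j, hv ▸ hx⟩

theorem exists_isVert_of_mem {l : List (Fin n)} {m : ℕ} {c : Fin n} (h : c ∈ l) :
    ∃ e ∈ (columnPath l m).zip (columnPath l m).tail, isVert c e = true := by
  induction l generalizing m with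
  | nil => simp at h
  | cons i l ih =>
    rcases List.mem_cons.1 h with rfl | h
    · exact ⟨(midAt c (2 * m), midAt c (2 * m + 1)), by simp [columnPath], by simp [isVert, midAt]⟩
    · obtain ⟨e, he, hv⟩ := ih h (m := m + 1)
      refine ⟨e, ?_, hv⟩
      simp only [columnPath, List.tail_cons, List.zip_cons_cons]
      exact List.mem_cons_of_mem _ (List.mem_zip_cons_of_mem_zip_tail _ he)

theorem exists_isVert_iff_mem {l : List (Fin n)} {c : Fin n} :
    (∃ e ∈ (src n :: columnPath l 0).zip (src n :: columnPath l 0).tail, isVert c e = true) ↔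
      c ∈ l := by
  constructor
  · rintro ⟨e, he, hv⟩
    obtain ⟨j, hj⟩ := exists_mid_mem_of_isVert he hv
    exact mem_of_mid_mem_columnPath ((List.mem_cons.1 hj).resolve_left (by simp [src]))
  · intro h
    obtain ⟨e, he, hv⟩ := exists_isVert_of_mem h (m := 0)
    exact ⟨e, List.mem_zip_cons_of_mem_zip_tail _ he, hv⟩

theorem isPath_iff_eq_columnPath (hn : 0 < n) {p : List (Vtx n)} :
    IsPath (Arc G) (src n) (snk n) p ↔
      ∃ l : List (Fin n), l.length = n ∧ l.IsChain (ReflGen G) ∧ p = src n :: columnPath l 0 := by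
  constructor
  · rintro ⟨hch, hhead, hlast⟩
    obtain ⟨q, rfl⟩ : ∃ q, p = src n :: q := by cases p <;> simp_all
    cases q with
    | nil => simp [src, snk] at hlast
    | cons y q =>
      obtain ⟨hy, hq⟩ := List.isChain_cons_cons.1 hch
      obtain ⟨i, rfl⟩ := exists_eq_midAt_of_arc_src hy
      obtain ⟨l, hl, hil, heq⟩ := exists_eq_columnPath (m := 0) i.pos hq (by simpa using hlast)
      exact ⟨i :: l, by simp; omega, hil, by rw [heq]⟩
  · rintro ⟨l, hl, hch, rfl⟩
    obtain ⟨i, l, rfl⟩ := List.exists_cons_of_length_pos (hl ▸ hn)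
    exact ⟨.cons_cons (arc_src_midAt i) (isChain_columnPath (by simpa using hl) hch), rfl,
      by simp [List.getLast?_cons, getLast?_columnPath]⟩

end

/-- `G` has a Hamiltonian path iff the layered digraph `G'` contains an
`s`-`t` path that uses at least one arc from each of the `n` disjoint vertical
paths `P_1, …, P_n`. -/
theorem hamPath_iff_path_meeting_all_verticals (n : ℕ) (hn : 0 < n)
    (G : Fin n → Fin n → Prop) :
    HasHamPath G ↔
      ∃ p : List (Vtx n), IsPath (Arc G) (src n) (snk n) p ∧
        ∀ i : Fin n, ∃ e ∈ p.zip p.tail, isVert i e = true := by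
  simp only [HasHamPath, isPath_iff_eq_columnPath hn]
  constructor
  · rintro ⟨l, hnd, hlen, hch⟩
    refine ⟨src n :: columnPath l 0, ⟨l, hlen, hch.imp fun _ _ => .single, rfl⟩, fun c => ?_⟩
    exact exists_isVert_iff_mem.2 <|
      (List.nodup_iff_forall_mem_of_length_eq_card (by simpa using hlen)).1 hnd c
  · rintro ⟨_, ⟨l, hlen, hch, rfl⟩, hcov⟩
    have hnd : l.Nodup := (List.nodup_iff_forall_mem_of_length_eq_card (by simpa using hlen)).2
      fun c => exists_isVert_iff_mem.1 (hcov c)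
    exact ⟨l, hnd, hlen, hch.of_reflGen_of_nodup hnd⟩
end

section
/- One-to-one correspondence (Claim 1 of Lemma 2 in the discrete case q=1): in the digraph G^(1) built from a 3-CNF formula with n variables, there is a bijection between 0-1 assignments to x_1,...,x_n and s-t paths that use only solid (normal or fat) arcs; the path for assignment σ traverses, for each i, the subpath through the x_i-literal nodes if σ(x_i)=1 and through the ¬x_i-literal nodes if σ(x_i)=0. -/
/-- Vertices of the digraph `G^(1)` built from a 3-CNF formula with `n`
variables and `m` clauses: the source `s`, the sink `t`, variable nodes
`u_1,…,u_n`, the in/out literal nodes of the `m` clause gadgets (node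
`lit i b j` is a literal node for `x_i` if `b = true` and for `¬x_i` if
`b = false`; the index `j ∈ Fin (2m)` enumerates the in- and out-literal nodes
of the `m` gadgets), and the gadget source/sink nodes `gs j`, `gt j`. -/
inductive V14 (n m : ℕ) : Type where
  | s : V14 n m
  | t : V14 n m
  | u : Fin n → V14 n m
  | lit : Fin n → Bool → Fin (2 * m) → V14 n m
  | gs : Fin m → V14 n m
  | gt : Fin m → V14 n m

/-- The solid (normal or fat) arcs of `G^(1)`: `s → u_1`; from each `u_i` two
disjoint subpaths through all the `x_i`-literal nodes (resp. all the
`¬x_i`-literal nodes) of all gadgets, ending at `u_{i+1}` (or at `t` for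
`i = n`). -/
def SolidArc (n m : ℕ) : V14 n m → V14 n m → Prop
  | .s, .u i => i.val = 0
  | .u i, .lit i' _ j => i' = i ∧ j.val = 0
  | .lit i b j, .lit i' b' j' => i' = i ∧ b' = b ∧ j'.val = j.val + 1
  | .lit i _ j, .u i' => i'.val = i.val + 1 ∧ j.val = 2 * m - 1
  | .lit i _ j, .t => i.val = n - 1 ∧ j.val = 2 * m - 1
  | _, _ => False

/-- The non-solid arcs of `G^(1)`: the dashed arcs `s → s_{C_j}`, the gadget
recovery paths (collapsed to single arcs `s_{C_j} → t_{C_j}`), and the dotted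
arcs `t_{C_j} → t`. -/
def OtherArc (n m : ℕ) : V14 n m → V14 n m → Prop
  | .s, .gs _ => True
  | .gs j, .gt j' => j' = j
  | .gt _, .t => True
  | _, _ => False

/-- All arcs of `G^(1)`. -/
def Arc14 (n m : ℕ) (a b : V14 n m) : Prop := SolidArc n m a b ∨ OtherArc n m a b

/-! Along a solid arc the index `pos` (the position in the order `s, u₁`, row of `x₁`, `u₂`, …, `t`)
grows by exactly one, and every vertex other than the `u_i` has at most one solid out-arc, while
`u_i` has one into each of the rows of `x_i` and `¬x_i`. So an assignment `σ` turns the solid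
successor into a function `next σ`, and the path of `σ` is the orbit of `s` under it. Conversely,
on a solid `s`-`t` path the index of a vertex is its position, so the path meets at most one of the
first literal nodes of `x_i` and `¬x_i`; and every literal node it meets is reached, backwards,
from the first node of its row. Hence the path follows one row per variable: it is the path of
some `σ`. -/

theorem IsPath.mono {α : Type*} {A B : α → α → Prop} {s t : α} {p : List α}
    (hAB : ∀ ⦃a b⦄, A a b → B a b) (hp : IsPath A s t p) : IsPath B s t p :=
  ⟨List.IsChain.imp hAB hp.1, hp.2⟩

namespace V14

variable {n m : ℕ}

-- The index of a vertex on every solid path from `s`; junk `0` on the gadget nodes.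
def pos : V14 n m → ℕ
  | s => 0
  | u i => i * (2 * m + 1) + 1
  | lit i _ j => i * (2 * m + 1) + j + 2
  | t => n * (2 * m + 1) + 1
  | gs _ | gt _ => 0

def varNode (i : ℕ) : V14 n m := if h : i < n then u ⟨i, h⟩ else t

def Follows (σ : Fin n → Bool) : V14 n m → Prop
  | lit i c _ => c = σ i
  | _ => True

-- The solid successor chosen by `σ`; junk: it fixes `t` and the gadget nodes.
def next (σ : Fin n → Bool) : V14 n m → V14 n m
  | s => varNode 0
  | u i => if h : 0 < 2 * m then lit i (σ i) ⟨0, h⟩ else t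
  | lit i c j => if h : j.val + 1 < 2 * m then lit i c ⟨j + 1, h⟩ else varNode (i + 1)
  | v => v

theorem follows_next {σ : Fin n → Bool} {a : V14 n m} (ha : a.Follows σ) :
    (a.next σ).Follows σ := by
  cases a <;> simp only [next, varNode] <;> (try split_ifs) <;> simp_all [Follows]

theorem solidArc_lit_next (σ : Fin n → Bool) (i : Fin n) (c : Bool) (j : Fin (2 * m)) :
    SolidArc n m (lit i c j) ((lit i c j).next σ) := by
  have := i.isLt
  have := j.isLt
  simp only [next, varNode]
  split_ifs <;> simp [SolidArc] <;> omega

end V14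

namespace SolidArc

open V14

variable {n m : ℕ} {a b : V14 n m}

theorem pos_eq_succ (h : SolidArc n m a b) : b.pos = a.pos + 1 := by
  cases a <;> cases b <;> simp only [SolidArc] at h <;> simp only [pos]
  case s.u => simp [h]
  case u.lit => obtain ⟨rfl, hj⟩ := h; omega
  case lit.lit => obtain ⟨rfl, -, hj⟩ := h; omega
  case lit.u i _ j _ => rw [h.1, Nat.succ_mul]; omega
  case lit.t i _ j =>
    have hn : n * (2 * m + 1) = i * (2 * m + 1) + (2 * m + 1) := by
      rw [← Nat.succ_mul]; exact congrArg (· * (2 * m + 1)) (by omega)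
    omega

theorem eq_next {σ : Fin n → Bool} (h : SolidArc n m a b) (hb : b.Follows σ) :
    b = a.next σ := by
  cases a <;> cases b <;> simp only [SolidArc] at h <;> simp only [Follows] at hb
  case s.u i => simp only [next, varNode, dif_pos i.pos]; exact congrArg u (Fin.ext h)
  case u.lit i _ c j =>
    obtain ⟨rfl, hj⟩ := h
    simp only [next, dif_pos j.pos, hb]; exact congrArg _ (Fin.ext hj)
  case lit.lit i c j _ _ j' =>
    obtain ⟨rfl, rfl, hj⟩ := h
    simp only [next, dif_pos (hj ▸ j'.isLt)]; exact congrArg _ (Fin.ext hj)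
  case lit.u i c j i' =>
    simp only [next, dif_neg (show ¬(j.val + 1 < 2 * m) by omega), varNode,
      dif_pos (h.1 ▸ i'.isLt)]
    exact congrArg u (Fin.ext h.1)
  case lit.t => simp only [next, varNode]; split_ifs <;> first | rfl | omega

theorem to_next (σ : Fin n → Bool) (h : SolidArc n m a b) : SolidArc n m a (a.next σ) := by
  cases a <;> cases b <;> simp only [SolidArc] at h
  case s.u i => simp [next, varNode, i.pos, SolidArc]
  case u.lit i _ c j => simp [next, j.pos, SolidArc]
  all_goals exact solidArc_lit_next _ _ _ _

theorem target_to_next (hm : 0 < m) (σ : Fin n → Bool) (h : SolidArc n m a b) (hb : b ≠ t) :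
    SolidArc n m b (b.next σ) := by
  cases b with
  | u i => simp [next, show 0 < 2 * m by omega, SolidArc]
  | lit i c j => exact solidArc_lit_next _ _ _ _
  | t => exact absurd rfl hb
  | _ => cases a <;> simp [SolidArc] at h

theorem eq_lit_of_lit_succ {i : Fin n} {c : Bool} {j : ℕ} (hj : j + 1 < 2 * m)
    (h : SolidArc n m a (lit i c ⟨j + 1, hj⟩)) : a = lit i c ⟨j, by omega⟩ := by
  cases a <;> simp only [SolidArc] at h
  case lit =>
    obtain ⟨rfl, rfl, hj⟩ := h
    exact congrArg _ (Fin.ext (by simp only at hj ⊢; omega))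
  case u => omega

end SolidArc

namespace V14

open SolidArc

variable {n m : ℕ}

theorem iterate_next_u (σ : Fin n → Bool) (i : Fin n) {j : ℕ} (hj : j < 2 * m) :
    (next σ)^[j + 1] (u i : V14 n m) = lit i (σ i) ⟨j, hj⟩ := by
  induction j with
  | zero => simp [next, hj]
  | succ j ih =>
    rw [Function.iterate_succ_apply', ih (by omega)]
    simp [next, hj]

theorem iterate_next_s (hm : 0 < m) (σ : Fin n → Bool) {i : ℕ} (hi : i ≤ n) :
    (next σ)^[i * (2 * m + 1) + 1] (s : V14 n m) = varNode i := by
  induction i with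
  | zero => simp [next]
  | succ i ih =>
    have hi' : i < n := by omega
    rw [show (i + 1) * (2 * m + 1) + 1 = ((2 * m - 1 + 1) + 1) + (i * (2 * m + 1) + 1) by
      rw [Nat.succ_mul]; omega, Function.iterate_add_apply, ih hi'.le, varNode, dif_pos hi',
      Function.iterate_succ_apply', iterate_next_u σ _ (by omega), next,
      dif_neg (by dsimp only; omega)]

def solidPath (σ : Fin n → Bool) : List (V14 n m) :=
  (List.range (n * (2 * m + 1) + 2)).map fun k => (next σ)^[k] s

theorem solidArc_iterate_next (hn : 0 < n) (hm : 0 < m) (σ : Fin n → Bool) {k : ℕ}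
    (hk : k ≤ n * (2 * m + 1)) :
    SolidArc n m ((next σ)^[k] s) ((next σ)^[k + 1] s) ∧
      ((next σ)^[k + 1] (s : V14 n m)).pos = k + 1 := by
  induction k with
  | zero =>
    have : SolidArc n m s ((next σ) s) := to_next σ (b := u ⟨0, hn⟩) rfl
    exact ⟨this, this.pos_eq_succ⟩
  | succ k ih =>
    obtain ⟨harc, hpos⟩ := ih (by omega)
    have hne : (next σ)^[k + 1] s ≠ t := fun h => by rw [h, pos] at hpos; omega
    have harc' := harc.target_to_next hm σ hne
    rw [← Function.iterate_succ_apply' (next σ)] at harc'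
    exact ⟨harc', by rw [harc'.pos_eq_succ, hpos]⟩

theorem isPath_solidPath (hn : 0 < n) (hm : 0 < m) (σ : Fin n → Bool) :
    IsPath (SolidArc n m) s t (solidPath σ) := by
  refine ⟨?_, by simp [solidPath], ?_⟩
  · show List.IsChain _ _
    rw [solidPath, List.isChain_map, List.isChain_range]
    intro k hk
    exact (solidArc_iterate_next hn hm σ (by omega)).1
  · rw [solidPath, List.getLast?_map, List.getLast?_range]
    simp [iterate_next_s hm σ le_rfl, varNode]

theorem lit_mem_solidPath_iff (hm : 0 < m) (σ : Fin n → Bool) (i : Fin n) (c : Bool)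
    (j : Fin (2 * m)) : lit i c j ∈ solidPath σ ↔ c = σ i := by
  constructor
  · intro hmem
    obtain ⟨k, -, hk⟩ := List.mem_map.mp hmem
    have : ∀ k, ((next σ)^[k] (s : V14 n m)).Follows σ := fun k => by
      induction k with
      | zero => trivial
      | succ k ih => rw [Function.iterate_succ_apply']; exact follows_next ih
    simpa [hk, Follows] using this k
  · rintro rfl
    have hle : (i.val + 1) * (2 * m + 1) ≤ n * (2 * m + 1) := Nat.mul_le_mul_right _ i.isLt
    refine List.mem_map.mpr ⟨(j + 1) + (i * (2 * m + 1) + 1), List.mem_range.mpr ?_, ?_⟩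
    · rw [Nat.succ_mul] at hle; omega
    · rw [Function.iterate_add_apply, iterate_next_s hm σ i.isLt.le, varNode, dif_pos i.isLt,
        iterate_next_u]

variable {p : List (V14 n m)}

theorem solidPath_injective (hm : 0 < m) : Function.Injective (solidPath (n := n) (m := m)) := by
  intro σ σ' h
  funext i
  have hmem := (lit_mem_solidPath_iff hm σ i (σ i) ⟨0, by omega⟩).2 rfl
  rw [h] at hmem
  exact (lit_mem_solidPath_iff hm σ' i (σ i) _).1 hmem

theorem pos_getElem_of_isChain (hc : p.IsChain (SolidArc n m)) (hs : p.head? = some s) :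
    ∀ k (hk : k < p.length), p[k].pos = k
  | 0, hk => by simp [List.head?_eq_getElem?, hk] at hs; rw [hs, pos]
  | k + 1, hk => by
    rw [(List.isChain_iff_getElem.mp hc k hk).pos_eq_succ, pos_getElem_of_isChain hc hs k]

theorem length_eq_of_isPath (hp : IsPath (SolidArc n m) s t p) :
    p.length = n * (2 * m + 1) + 2 := by
  obtain ⟨hc, hs, ht⟩ := hp
  rw [List.getLast?_eq_getElem?] at ht
  have hlen : p.length - 1 < p.length := by
    cases p <;> simp_all
  rw [List.getElem?_eq_getElem hlen, Option.some_inj] at ht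
  have := pos_getElem_of_isChain hc hs _ hlen
  rw [ht, pos] at this
  omega

theorem eq_of_mem_of_pos_eq (hc : p.IsChain (SolidArc n m)) (hs : p.head? = some s)
    {x y : V14 n m} (hx : x ∈ p) (hy : y ∈ p) (h : x.pos = y.pos) : x = y := by
  obtain ⟨k, hk, rfl⟩ := List.getElem_of_mem hx
  obtain ⟨l, hl, rfl⟩ := List.getElem_of_mem hy
  simp only [pos_getElem_of_isChain hc hs] at h
  simp only [h]

theorem lit_zero_mem_of_lit_mem (hc : p.IsChain (SolidArc n m)) (hs : p.head? = some s)
    {i : Fin n} {c : Bool} {j : ℕ} (hj : j < 2 * m) (hmem : lit i c ⟨j, hj⟩ ∈ p) :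
    lit i c ⟨0, by omega⟩ ∈ p := by
  induction j with
  | zero => exact hmem
  | succ j ih =>
    obtain ⟨k, hk, hpk⟩ := List.getElem_of_mem hmem
    obtain ⟨k, rfl⟩ : ∃ k', k = k' + 1 := by
      refine Nat.exists_eq_add_one.mpr (Nat.pos_of_ne_zero fun hk0 => ?_)
      have := pos_getElem_of_isChain hc hs k hk
      rw [hpk, pos] at this
      omega
    have harc := List.isChain_iff_getElem.mp hc k hk
    rw [hpk] at harc
    exact ih (by omega) (eq_lit_of_lit_succ hj harc ▸ List.getElem_mem _)

theorem exists_forall_follows (hm : 0 < m) (hc : p.IsChain (SolidArc n m))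
    (hs : p.head? = some s) : ∃ σ : Fin n → Bool, ∀ x ∈ p, x.Follows σ := by
  classical
  refine ⟨fun i => decide (lit i true ⟨0, by omega⟩ ∈ p), fun x hx => ?_⟩
  cases x with
  | lit i c j =>
    have h0 := lit_zero_mem_of_lit_mem hc hs j.isLt hx
    cases c with
    | true => simpa [Follows] using h0
    | false =>
      simp only [Follows, Bool.false_eq, decide_eq_false_iff_not]
      intro htrue
      simpa using eq_of_mem_of_pos_eq hc hs htrue h0 rfl
  | _ => trivial

theorem eq_solidPath_of_forall_follows {σ : Fin n → Bool} (hp : IsPath (SolidArc n m) s t p)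
    (hσ : ∀ x ∈ p, x.Follows σ) : p = solidPath σ := by
  have hlen := length_eq_of_isPath hp
  refine List.ext_getElem (by simp [solidPath, hlen]) fun k hk _ => ?_
  simp only [solidPath, List.getElem_map, List.getElem_range]
  induction k with
  | zero => simpa [List.head?_eq_getElem?, hk] using hp.2.1
  | succ k ih =>
    rw [Function.iterate_succ_apply', ← ih (by omega) (by simp [solidPath]; omega)]
    exact eq_next (List.isChain_iff_getElem.mp hp.1 k hk) (hσ _ (List.getElem_mem _))

end V14

/-- Claim 1 (case `q = 1`): there is a one-to-one correspondence between 0-1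
assignments to `x_1,…,x_n` and the `s`-`t` paths of `G^(1)` that use only solid
arcs; the path for `σ` traverses the `x_i`-literal nodes if `σ i = true` and
the `¬x_i`-literal nodes if `σ i = false`. -/
theorem assignment_path_bijection (n m : ℕ) (hn : 0 < n) (hm : 0 < m) :
    ∃ F : (Fin n → Bool) → List (V14 n m),
      (∀ σ, IsPath (Arc14 n m) V14.s V14.t (F σ) ∧ (F σ).Chain' (SolidArc n m)) ∧
      Function.Injective F ∧
      (∀ p : List (V14 n m), IsPath (Arc14 n m) V14.s V14.t p →
        p.Chain' (SolidArc n m) → ∃ σ, F σ = p) ∧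
      (∀ σ (i : Fin n) (b : Bool) (j : Fin (2 * m)),
        V14.lit i b j ∈ F σ ↔ b = σ i) := by
  refine ⟨V14.solidPath, fun σ => ?_, V14.solidPath_injective hm, fun p hp hsolid => ?_,
    V14.lit_mem_solidPath_iff hm⟩
  · have hpath := V14.isPath_solidPath hn hm σ
    exact ⟨hpath.mono fun _ _ => Or.inl, hpath.1⟩
  · obtain ⟨σ, hσ⟩ := V14.exists_forall_follows hm hsolid hp.2.1
    exact ⟨σ, (V14.eq_solidPath_of_forall_follows ⟨hsolid, hp.2⟩ hσ).symm⟩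
end

section
/- For the assignment-to-path correspondence in G^(q): the solid-arc s-t path X_σ determined by assignment σ passes through exactly q literal arcs of a path in clause gadget G^(q)_{(C^1,...,C^q)} if and only if σ satisfies all of C^1,...,C^q. Hence the number ℓ of clause gadgets containing an s-t path intersecting X_σ in exactly q literal arcs equals t^q, where t is the number of clauses satisfied by σ. -/
/-- `σ` satisfies the literal `(i, b)` (meaning `x_i` if `b = true`, `¬x_i`
otherwise). -/
def SatLit {n : ℕ} (σ : Fin n → Bool) (l : Fin n × Bool) : Prop := σ l.1 = l.2

/-- `σ` satisfies the 3-clause `c` (a triple of literals). -/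
def SatClause {n : ℕ} (σ : Fin n → Bool) (c : Fin 3 → Fin n × Bool) : Prop :=
  ∃ a : Fin 3, SatLit σ (c a)

/-- A choice `f` of one literal from each clause of the tuple
`(C (T 0), …, C (T (q-1)))` is contradictory if it picks both `x_i` and `¬x_i`
for some `i`. -/
def Contradictory {n m q : ℕ} (C : Fin m → Fin 3 → Fin n × Bool)
    (T : Fin q → Fin m) (f : Fin q → Fin 3) : Prop :=
  ∃ j j' : Fin q, ∃ i : Fin n,
    C (T j) (f j) = (i, true) ∧ C (T j') (f j') = (i, false)

/-! A satisfying assignment `σ` makes at least one literal of every clause true; choosing such a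
literal in each clause of the tuple gives a literal path all of whose `q` literal arcs lie on
`X_σ`, and this choice is automatically non-contradictory because `σ` cannot make both `x_i` and
`¬x_i` true. The gadgets counted are thus the `q`-tuples of satisfied clauses, `t ^ q` of them. -/

theorem Set.ncard_setOf_forall_mem {ι α : Type*} [Finite ι] (s : Set α) :
    {f : ι → α | ∀ i, f i ∈ s}.ncard = s.ncard ^ Nat.card ι := by
  rw [← _root_.Nat.card_coe_set_eq, ← _root_.Nat.card_coe_set_eq, ← Nat.card_fun]
  exact Nat.card_congr (Equiv.subtypePiEquivPi (α := ι) (p := fun _ a => a ∈ s))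

theorem not_satLit_pos_and_neg {n : ℕ} (σ : Fin n → Bool) (i : Fin n) :
    ¬ (SatLit σ (i, true) ∧ SatLit σ (i, false)) := by
  rintro ⟨hpos, hneg⟩
  exact absurd (hpos.symm.trans hneg) Bool.noConfusion

theorem not_contradictory_of_forall_satLit {n m q : ℕ} {σ : Fin n → Bool}
    {C : Fin m → Fin 3 → Fin n × Bool} {T : Fin q → Fin m} {f : Fin q → Fin 3}
    (hf : ∀ j, SatLit σ (C (T j) (f j))) : ¬ Contradictory C T f := by
  rintro ⟨j, j', i, hj, hj'⟩
  exact not_satLit_pos_and_neg σ i ⟨hj ▸ hf j, hj' ▸ hf j'⟩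

theorem exists_satisfied_choice_iff {n m q : ℕ} (σ : Fin n → Bool)
    (C : Fin m → Fin 3 → Fin n × Bool) (T : Fin q → Fin m) :
    (∃ f : Fin q → Fin 3, ¬ Contradictory C T f ∧ ∀ j, SatLit σ (C (T j) (f j))) ↔
      ∀ j, SatClause σ (C (T j)) := by
  constructor
  · rintro ⟨f, -, hf⟩ j
    exact ⟨f j, hf j⟩
  · intro h
    choose f hf using h
    exact ⟨f, not_contradictory_of_forall_satLit hf, hf⟩

/-- In `G^(q)`: the solid path `X_σ` meets some literal path of the gadget of
the clause tuple `T` in exactly `q` literal arcs — i.e. there is a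
non-contradictory choice of one literal per clause of the tuple, all made true
by `σ` — iff `σ` satisfies all the clauses of the tuple. Hence the number `ℓ`
of such gadgets equals `t^q`, where `t` is the number of clauses satisfied
by `σ`. -/
theorem gadget_intersection_count (n m q t : ℕ)
    (C : Fin m → Fin 3 → Fin n × Bool) (σ : Fin n → Bool)
    (ht : Set.ncard {j : Fin m | SatClause σ (C j)} = t) :
    (∀ T : Fin q → Fin m,
      ((∃ f : Fin q → Fin 3, ¬ Contradictory C T f ∧
          ∀ j, SatLit σ (C (T j) (f j))) ↔
        ∀ j, SatClause σ (C (T j)))) ∧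
    Set.ncard {T : Fin q → Fin m | ∀ j, SatClause σ (C (T j))} = t ^ q := by
  refine ⟨exists_satisfied_choice_iff σ C, ?_⟩
  have hcount := Set.ncard_setOf_forall_mem (ι := Fin q) {j : Fin m | SatClause σ (C j)}
  rwa [ht, Nat.card_fin] at hcount
end
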